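/- Let (X_t)_{t∈ℤ⁺} be adapted to (F_t), X_0 = 0, with increments Δ_t. Fix α ∈ (0,1], β > α, and suppose there exist c > 0, C < ∞, x₀ < ∞ with E[(Δ_t⁺)^α | F_t] ≤ C a.s. for all t and P[Δ_t⁻ > x | F_t] ≥ c x^{−β} a.s. for all x ≥ x₀ and all t. Define λ_x = max{t ∈ ℤ⁺ : X_t ≤ x}. Then for every x ∈ ℝ and every p > (β/α) − 1, E[λ_x^p] = ∞ (where λ_x := ∞ if the set is unbounded). -/

import Mathlib

open MeasureTheory Filter ENNReal

/-!
Fix `n ≥ 1`. By Markov's inequality, applied conditionally on the past, the positive parts of the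
increments satisfy `∑ (Δ_u⁺)^α ≲ C n` with probability bounded below, even conditionally; as
`α ≤ 1`, this bounds their total contribution to `X_n` by `(C n)^(1/α)`. A single downward jump of
size `M ≍ n^(1/α)` therefore pushes `X_n` below `x`, and each step makes such a jump with
conditional probability at least `q = c M^(-β) ≍ n^(-β/α)`. If some jump happens before `n` with
probability `≥ 1/2` we are done; otherwise the events "first jump at `s`, small positive increments
elsewhere" (`s < n`) are disjoint and each has probability `≳ q`. Either way
`P[X_n ≤ x] ≳ n^(1 - β/α)`. Since `λ_x ≥ n` on `{X_n ≤ x}`,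
`E[λ_x^p] ≥ ∑ₙ ((n+1)^p - n^p) P[X_{n+1} ≤ x] ≳ ∑ₙ n^(p - β/α) = ∞`.
-/

theorem Real.rpow_sum_le_sum_rpow {ι : Type*} (s : Finset ι) {f : ι → ℝ} (hf : ∀ i ∈ s, 0 ≤ f i)
    {p : ℝ} (hp : 0 < p) (hp1 : p ≤ 1) : (∑ i ∈ s, f i) ^ p ≤ ∑ i ∈ s, f i ^ p := by
  classical
  induction s using Finset.induction_on with
  | empty => simp [Real.zero_rpow hp.ne']
  | insert i s hi ih =>
    rw [Finset.sum_insert hi, Finset.sum_insert hi]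
    have hfs : ∀ j ∈ s, 0 ≤ f j := fun j hj => hf j (Finset.mem_insert_of_mem hj)
    calc (f i + ∑ j ∈ s, f j) ^ p ≤ f i ^ p + (∑ j ∈ s, f j) ^ p :=
          Real.rpow_add_le_add_rpow (hf i (Finset.mem_insert_self i s))
            (Finset.sum_nonneg hfs) hp.le hp1
      _ ≤ f i ^ p + ∑ j ∈ s, f j ^ p := by gcongr; exact ih hfs

theorem Finset.sum_le_rpow_sum_max_zero_rpow {ι : Type*} (s : Finset ι) (y : ι → ℝ) {α : ℝ}
    (hα : 0 < α) (hα1 : α ≤ 1) :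
    ∑ i ∈ s, y i ≤ (∑ i ∈ s, max (y i) 0 ^ α) ^ α⁻¹ := by
  have hpos : 0 ≤ ∑ i ∈ s, max (y i) 0 := Finset.sum_nonneg fun i _ => le_max_right _ _
  calc ∑ i ∈ s, y i ≤ ∑ i ∈ s, max (y i) 0 := Finset.sum_le_sum fun i _ => le_max_left _ _
    _ = ((∑ i ∈ s, max (y i) 0) ^ α) ^ α⁻¹ := (Real.rpow_rpow_inv hpos hα.ne').symm
    _ ≤ (∑ i ∈ s, max (y i) 0 ^ α) ^ α⁻¹ := by
        gcongr
        exact Real.rpow_sum_le_sum_rpow s (fun i _ => le_max_right _ _) hα hα1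

theorem Real.rpow_le_one_sub_min_mul {t p : ℝ} (ht : 0 ≤ t) (ht1 : t ≤ 1) (hp : 0 < p) :
    t ^ p ≤ 1 - min p 1 * (1 - t) := by
  rcases le_total p 1 with hp1 | hp1
  · rw [min_eq_left hp1]
    have := rpow_one_add_le_one_add_mul_self (s := t - 1) (by linarith) hp.le hp1
    rw [add_sub_cancel] at this
    linarith
  · rw [min_eq_right hp1]
    linarith [Real.rpow_le_self_of_le_one ht ht1 hp1]

theorem Real.min_mul_rpow_sub_one_le_rpow_sub_rpow {k p : ℝ} (hk : 0 ≤ k) (hp : 0 < p) :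
    min p 1 * (k + 1) ^ (p - 1) ≤ (k + 1) ^ p - k ^ p := by
  have hk1 : 0 < k + 1 := by linarith
  have ht := Real.rpow_le_one_sub_min_mul (t := k / (k + 1)) (by positivity)
    ((div_le_one hk1).2 (by linarith)) hp
  rw [Real.div_rpow hk hk1.le, div_le_iff₀ (by positivity)] at ht
  have hsplit : (k + 1) ^ p = (k + 1) ^ (p - 1) * (k + 1) := by
    rw [← Real.rpow_add_one hk1.ne', sub_add_cancel]
  have h1t : 1 - k / (k + 1) = (k + 1)⁻¹ := by field_simp; ring
  rw [h1t] at ht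
  have : (1 - min p 1 * (k + 1)⁻¹) * (k + 1) ^ p = (k + 1) ^ p - min p 1 * (k + 1) ^ (p - 1) := by
    rw [hsplit]; field_simp
  linarith

theorem ENNReal.sum_range_sub_le {f : ℕ → ℝ≥0∞} (hf : Monotone f) (n : ℕ) :
    ∑ i ∈ Finset.range n, (f (i + 1) - f i) ≤ f n := by
  induction n with
  | zero => simp
  | succ n ih =>
    rw [Finset.sum_range_succ]
    calc _ ≤ f n + (f (n + 1) - f n) := by gcongr
      _ = f (n + 1) := add_tsub_cancel_of_le (hf n.le_succ)

theorem ENNReal.tsum_indicator_rpow_succ_sub_le (S : Set ℕ) {p : ℝ} (hp : 0 ≤ p) :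
    ∑' k, {k | k + 1 ∈ S}.indicator (fun k => ((k + 1 : ℕ) : ℝ≥0∞) ^ p - (k : ℝ≥0∞) ^ p) k ≤
      (⨆ t ∈ S, (t : ℝ≥0∞)) ^ p := by
  set L := ⨆ t ∈ S, (t : ℝ≥0∞)
  -- the powers of the integers truncated at `L`, whose increments dominate the summands
  set f : ℕ → ℝ≥0∞ := fun j => min ((j : ℝ≥0∞) ^ p) (L ^ p)
  have hf : Monotone f := fun i j hij => by
    simp only [f]; gcongr
  have hterm : ∀ k, {k | k + 1 ∈ S}.indicator
      (fun k => ((k + 1 : ℕ) : ℝ≥0∞) ^ p - (k : ℝ≥0∞) ^ p) k ≤ f (k + 1) - f k := by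
    intro k
    by_cases hk : k + 1 ∈ S
    · rw [Set.indicator_of_mem (show k ∈ {k | k + 1 ∈ S} from hk)]
      have hL : ((k + 1 : ℕ) : ℝ≥0∞) ≤ L := le_biSup (fun t : ℕ => (t : ℝ≥0∞)) hk
      have hL' : (k : ℝ≥0∞) ≤ L := le_trans (by exact_mod_cast k.le_succ) hL
      simp only [f, min_eq_left (rpow_le_rpow hL hp), min_eq_left (rpow_le_rpow hL' hp)]
      exact le_rfl
    · rw [Set.indicator_of_notMem (show k ∉ {k | k + 1 ∈ S} from hk)]
      exact zero_le
  refine ENNReal.tsum_le_of_sum_range_le fun n => ?_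
  calc _ ≤ ∑ k ∈ Finset.range n, (f (k + 1) - f k) := Finset.sum_le_sum fun k _ => hterm k
    _ ≤ f n := ENNReal.sum_range_sub_le hf n
    _ ≤ L ^ p := min_le_right _ _

theorem tsum_rpow_succ_sub_mul_le_lintegral {Ω : Type*} {m0 : MeasurableSpace Ω} (μ : Measure Ω)
    {E : ℕ → Set Ω} (hE : ∀ k, MeasurableSet (E k)) {p : ℝ} (hp : 0 ≤ p) :
    ∑' k, (((k + 1 : ℕ) : ℝ≥0∞) ^ p - (k : ℝ≥0∞) ^ p) * μ (E (k + 1)) ≤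
      ∫⁻ ω, (⨆ (t : ℕ) (_ : ω ∈ E t), (t : ℝ≥0∞)) ^ p ∂μ := by
  calc _ = ∫⁻ ω, ∑' k, (E (k + 1)).indicator
        (fun _ => ((k + 1 : ℕ) : ℝ≥0∞) ^ p - (k : ℝ≥0∞) ^ p) ω ∂μ := by
        rw [lintegral_tsum fun k => (measurable_const.indicator (hE (k + 1))).aemeasurable]
        simp only [lintegral_indicator_const (hE _)]
    _ ≤ _ := lintegral_mono fun ω => ENNReal.tsum_indicator_rpow_succ_sub_le {t | ω ∈ E t} hp

theorem ENNReal.ofReal_min_mul_rpow_sub_one_le (k : ℕ) {p : ℝ} (hp : 0 < p) :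
    ENNReal.ofReal (min p 1 * ((k : ℝ) + 1) ^ (p - 1)) ≤
      ((k + 1 : ℕ) : ℝ≥0∞) ^ p - (k : ℝ≥0∞) ^ p := by
  rw [← ENNReal.ofReal_natCast, ← ENNReal.ofReal_natCast k,
    ENNReal.ofReal_rpow_of_nonneg (by positivity) hp.le,
    ENNReal.ofReal_rpow_of_nonneg (by positivity) hp.le, ← ENNReal.ofReal_sub _ (by positivity)]
  push_cast
  exact ENNReal.ofReal_le_ofReal (Real.min_mul_rpow_sub_one_le_rpow_sub_rpow k.cast_nonneg hp)

theorem ENNReal.tsum_ofReal_mul_add_one_rpow_eq_top {c r : ℝ} (hc : 0 < c) (hr : -1 ≤ r) :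
    ∑' k : ℕ, ENNReal.ofReal (c * ((k : ℝ) + 1) ^ r) = ⊤ := by
  by_contra h
  have hsum : Summable fun k : ℕ => c * ((k : ℝ) + 1) ^ r :=
    (ENNReal.summable_toReal h).congr fun k => ENNReal.toReal_ofReal (by positivity)
  rw [summable_mul_left_iff hc.ne'] at hsum
  have hnat : Summable fun k : ℕ => (k : ℝ) ^ r := by
    rw [← summable_nat_add_iff 1]
    simpa using hsum
  exact absurd (Real.summable_nat_rpow.1 hnat) (not_lt.2 hr)

section Conditional

variable {Ω : Type*} {m0 : MeasurableSpace Ω} {μ : Measure Ω}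

theorem mul_measureReal_le_measureReal_inter_of_le_condExp [IsFiniteMeasure μ]
    {m : MeasurableSpace Ω} (hm : m ≤ m0) {A S : Set Ω} (hA : MeasurableSet[m0] A)
    (hS : MeasurableSet[m] S) {q : ℝ}
    (hq : ∀ᵐ ω ∂μ, q ≤ (μ[A.indicator (fun _ => (1 : ℝ))|m]) ω) :
    q * μ.real S ≤ μ.real (S ∩ A) :=
  calc q * μ.real S = ∫ _ in S, q ∂μ := by rw [setIntegral_const, smul_eq_mul, mul_comm]
    _ ≤ ∫ ω in S, (μ[A.indicator (fun _ => (1 : ℝ))|m]) ω ∂μ :=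
        setIntegral_mono_ae (integrableOn_const (measure_ne_top _ _))
          integrable_condExp.integrableOn hq
    _ = ∫ ω in S, A.indicator (fun _ => (1 : ℝ)) ω ∂μ :=
        setIntegral_condExp hm ((integrable_const 1).indicator hA) hS
    _ = μ.real (S ∩ A) := by rw [setIntegral_indicator hA, setIntegral_const, smul_eq_mul, mul_one]

variable (F : Filtration ℕ m0) {g : ℕ → Ω → ℝ} {C : ℝ}

theorem mul_measureReal_inter_le_sum_le [IsFiniteMeasure μ] (hg0 : ∀ u ω, 0 ≤ g u ω)
    (hgi : ∀ u, Integrable (g u) μ) (hgC : ∀ u, ∀ᵐ ω ∂μ, (μ[g u|F u]) ω ≤ C)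
    {m : ℕ} {S : Set Ω} (hS : MeasurableSet[F m] S) {I : Finset ℕ} (hI : ∀ u ∈ I, m ≤ u)
    (b : ℝ) : b * μ.real (S ∩ {ω | b ≤ ∑ u ∈ I, g u ω}) ≤ I.card * C * μ.real S := by
  have hS0 : MeasurableSet S := F.le m S hS
  calc b * μ.real (S ∩ {ω | b ≤ ∑ u ∈ I, g u ω})
      = b * (μ.restrict S).real {ω | b ≤ ∑ u ∈ I, g u ω} := by
        rw [measureReal_restrict_apply' hS0, Set.inter_comm]
    _ ≤ ∫ ω in S, ∑ u ∈ I, g u ω ∂μ :=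
        mul_meas_ge_le_integral_of_nonneg
          (ae_of_all _ fun ω => Finset.sum_nonneg fun u _ => hg0 u ω)
          (integrable_finsetSum I fun u _ => hgi u).integrableOn b
    _ = ∑ u ∈ I, ∫ ω in S, (μ[g u|F u]) ω ∂μ := by
        rw [integral_finsetSum I fun u _ => (hgi u).integrableOn]
        refine Finset.sum_congr rfl fun u hu => ?_
        exact (setIntegral_condExp (F.le u) (hgi u) (F.mono (hI u hu) S hS)).symm
    _ ≤ ∑ u ∈ I, ∫ _ in S, C ∂μ := Finset.sum_le_sum fun u _ =>
        setIntegral_mono_ae integrable_condExp.integrableOn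
          (integrableOn_const (measure_ne_top _ _)) (hgC u)
    _ = I.card * C * μ.real S := by
        simp only [setIntegral_const, smul_eq_mul, Finset.sum_const, nsmul_eq_mul]; ring

theorem measureReal_inter_sum_ge_le [IsProbabilityMeasure μ] (hg0 : ∀ u ω, 0 ≤ g u ω)
    (hgi : ∀ u, Integrable (g u) μ) (hgC : ∀ u, ∀ᵐ ω ∂μ, (μ[g u|F u]) ω ≤ C) (hC : 0 ≤ C)
    {m n : ℕ} {S : Set Ω} (hS : MeasurableSet[F m] S) {I : Finset ℕ}
    (hIn : I ⊆ Finset.range n) (hI : ∀ u ∈ I, m ≤ u) {b : ℝ} (hb : 0 < b) :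
    μ.real (S ∩ {ω | b ≤ ∑ u ∈ I, g u ω}) ≤ n * C / b * μ.real S := by
  have hcard : (I.card : ℝ) ≤ n := by
    exact_mod_cast (Finset.card_le_card hIn).trans (Finset.card_range n).le
  rw [div_mul_eq_mul_div, le_div_iff₀ hb, mul_comm]
  calc _ ≤ I.card * C * μ.real S := mul_measureReal_inter_le_sum_le F hg0 hgi hgC hS hI b
    _ ≤ n * C * μ.real S := by gcongr

end Conditional

section OneBigJump

variable {Ω : Type*}

def noJumpBefore (A : ℕ → Set Ω) (s : ℕ) : Set Ω := ⋂ u < s, (A u)ᶜ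

def oneJumpSet (g : ℕ → Ω → ℝ) (A : ℕ → Set Ω) (n : ℕ) (b : ℝ) : Set Ω :=
  {ω | ∃ s < n, ω ∈ A s ∧ ∑ u ∈ (Finset.range n).erase s, g u ω ≤ b}

def firstJumpSet (g : ℕ → Ω → ℝ) (A : ℕ → Set Ω) (n : ℕ) (a : ℝ) (s : ℕ) : Set Ω :=
  noJumpBefore A s ∩ {ω | ∑ u ∈ Finset.range s, g u ω < a} ∩ A s ∩
    {ω | ∑ u ∈ Finset.Ico (s + 1) n, g u ω < a}

variable {g : ℕ → Ω → ℝ} {A : ℕ → Set Ω} {n : ℕ}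

theorem noJumpBefore_anti : Antitone (noJumpBefore A) := fun _ _ hst =>
  Set.biInter_subset_biInter_left fun _ hu => lt_of_lt_of_le hu hst

theorem firstJumpSet_subset_oneJumpSet {a : ℝ} {s : ℕ} (hs : s < n) :
    firstJumpSet g A n a s ⊆ oneJumpSet g A n (2 * a) := by
  classical
  rintro ω ⟨⟨⟨-, hbefore⟩, hjump⟩, hafter⟩
  refine ⟨s, hs, hjump, ?_⟩
  have hsplit := Finset.sum_range_add_sum_Ico (fun u => g u ω) hs.le
  rw [Finset.sum_eq_sum_Ico_succ_bot hs, ← Finset.add_sum_erase _ _ (Finset.mem_range.2 hs)]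
    at hsplit
  simp only [Set.mem_ofPred_eq] at hbefore hafter
  linarith

theorem pairwiseDisjoint_firstJumpSet {a : ℝ} :
    (Set.univ : Set ℕ).PairwiseDisjoint (firstJumpSet g A n a) := by
  have hlt : ∀ s t, s < t → Disjoint (firstJumpSet g A n a s) (firstJumpSet g A n a t) :=
    fun s t hst => Set.disjoint_left.2 fun ω hs ht =>
      Set.mem_iInter₂.1 ht.1.1.1 s hst hs.1.2
  intro s _ t _ hne
  rcases lt_or_gt_of_ne hne with h | h
  · exact hlt s t h
  · exact (hlt t s h).symm

theorem compl_noJumpBefore_subset {b : ℝ} (hg0 : ∀ u ω, 0 ≤ g u ω) :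
    (noJumpBefore A n)ᶜ ⊆ oneJumpSet g A n b ∪ {ω | b ≤ ∑ u ∈ Finset.range n, g u ω} := by
  intro ω hω
  obtain ⟨s, hs, hA⟩ : ∃ s < n, ω ∈ A s := by
    simpa [noJumpBefore] using hω
  by_cases hsum : b ≤ ∑ u ∈ Finset.range n, g u ω
  · exact Or.inr hsum
  · refine Or.inl ⟨s, hs, hA, le_trans ?_ (not_le.1 hsum).le⟩
    exact Finset.sum_le_sum_of_subset_of_nonneg (Finset.erase_subset _ _)
      fun u _ _ => hg0 u ω

variable {m0 : MeasurableSpace Ω} {μ : Measure Ω} [IsProbabilityMeasure μ] (F : Filtration ℕ m0)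
  {C q a : ℝ}

theorem measurableSet_noJumpBefore (hA : ∀ u, MeasurableSet[F (u + 1)] (A u)) (s : ℕ) :
    MeasurableSet[F s] (noJumpBefore A s) :=
  MeasurableSet.iInter fun u => MeasurableSet.iInter fun hu => (F.mono hu _ (hA u)).compl

theorem measurableSet_sum_lt (hg : ∀ u, Measurable[F (u + 1)] (g u)) {s : ℕ} {I : Finset ℕ}
    (hI : ∀ u ∈ I, u < s) (a : ℝ) : MeasurableSet[F s] {ω | ∑ u ∈ I, g u ω < a} :=
  measurableSet_lt (Finset.measurable_sum I fun u hu => (hg u).mono (F.mono (hI u hu)) le_rfl)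
    measurable_const

theorem measureReal_firstJumpSet_ge (hg0 : ∀ u ω, 0 ≤ g u ω)
    (hg : ∀ u, Measurable[F (u + 1)] (g u)) (hgi : ∀ u, Integrable (g u) μ)
    (hgC : ∀ u, ∀ᵐ ω ∂μ, (μ[g u|F u]) ω ≤ C) (hA : ∀ u, MeasurableSet[F (u + 1)] (A u))
    (hAq : ∀ u, ∀ᵐ ω ∂μ, q ≤ (μ[(A u).indicator (fun _ => (1 : ℝ))|F u]) ω)
    (hq : 0 ≤ q) (hC : 0 ≤ C) (ha : 0 < a) (hna : 4 * n * C ≤ a) {s : ℕ} (hs : s < n)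
    (hnoJump : 1 / 2 ≤ μ.real (noJumpBefore A n)) :
    3 / 16 * q ≤ μ.real (firstJumpSet g A n a s) := by
  have hratio : n * C / a ≤ 1 / 4 := by rw [div_le_iff₀ ha]; linarith
  set G := noJumpBefore A s ∩ {ω | ∑ u ∈ Finset.range s, g u ω < a}
  have hGm : MeasurableSet[F s] G := (measurableSet_noJumpBefore F hA s).inter
    (measurableSet_sum_lt F hg (fun u hu => Finset.mem_range.1 hu) a)
  have hGAm : MeasurableSet[F (s + 1)] (G ∩ A s) :=
    (F.mono s.le_succ _ hGm).inter (hA s)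
  have hG : 1 / 4 ≤ μ.real G := by
    have hcover : noJumpBefore A n ⊆ G ∪ (Set.univ ∩ {ω | a ≤ ∑ u ∈ Finset.range s, g u ω}) := by
      intro ω hω
      by_cases hsum : a ≤ ∑ u ∈ Finset.range s, g u ω
      · exact Or.inr ⟨trivial, hsum⟩
      · exact Or.inl ⟨noJumpBefore_anti hs.le hω, not_le.1 hsum⟩
    have hMarkov := measureReal_inter_sum_ge_le F hg0 hgi hgC hC MeasurableSet.univ
      (Finset.range_subset_range.2 hs.le) (fun u _ => Nat.zero_le u) ha
    rw [probReal_univ, mul_one] at hMarkov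
    linarith [measureReal_mono (μ := μ) hcover, measureReal_union_le (μ := μ) G
      (Set.univ ∩ {ω | a ≤ ∑ u ∈ Finset.range s, g u ω})]
  have hGA : q * μ.real G ≤ μ.real (G ∩ A s) :=
    mul_measureReal_le_measureReal_inter_of_le_condExp (F.le s) (F.le _ _ (hA s)) hGm (hAq s)
  have hafter : μ.real (G ∩ A s ∩ {ω | a ≤ ∑ u ∈ Finset.Ico (s + 1) n, g u ω}) ≤
      1 / 4 * μ.real (G ∩ A s) := by
    refine (measureReal_inter_sum_ge_le F hg0 hgi hgC hC hGAm
      (fun u hu => Finset.mem_range.2 (Finset.mem_Ico.1 hu).2)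
      (fun u hu => (Finset.mem_Ico.1 hu).1) ha).trans ?_
    exact mul_le_mul_of_nonneg_right hratio measureReal_nonneg
  have hsmall : MeasurableSet {ω | ∑ u ∈ Finset.Ico (s + 1) n, g u ω < a} :=
    F.le n _ (measurableSet_sum_lt F hg (fun u hu => (Finset.mem_Ico.1 hu).2) a)
  have hsplit := measureReal_inter_add_sdiff (μ := μ) (s := G ∩ A s) hsmall
  have hdiff : (G ∩ A s) \ {ω | ∑ u ∈ Finset.Ico (s + 1) n, g u ω < a} =
      G ∩ A s ∩ {ω | a ≤ ∑ u ∈ Finset.Ico (s + 1) n, g u ω} := by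
    ext ω; simp [not_lt]
  rw [hdiff] at hsplit
  change 3 / 16 * q ≤ μ.real (G ∩ A s ∩ _)
  linarith [mul_le_mul_of_nonneg_left hG hq]

theorem mul_le_measureReal_oneJumpSet_of_noJump (hg0 : ∀ u ω, 0 ≤ g u ω)
    (hg : ∀ u, Measurable[F (u + 1)] (g u)) (hgi : ∀ u, Integrable (g u) μ)
    (hgC : ∀ u, ∀ᵐ ω ∂μ, (μ[g u|F u]) ω ≤ C) (hA : ∀ u, MeasurableSet[F (u + 1)] (A u))
    (hAq : ∀ u, ∀ᵐ ω ∂μ, q ≤ (μ[(A u).indicator (fun _ => (1 : ℝ))|F u]) ω)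
    (hq : 0 ≤ q) (hC : 0 ≤ C) (ha : 0 < a) (hna : 4 * n * C ≤ a)
    (hnoJump : 1 / 2 ≤ μ.real (noJumpBefore A n)) :
    3 / 16 * q * n ≤ μ.real (oneJumpSet g A n (2 * a)) := by
  have hm : ∀ s, MeasurableSet (firstJumpSet g A n a s) := fun s =>
    ((F.le s _ ((measurableSet_noJumpBefore F hA s).inter
      (measurableSet_sum_lt F hg (fun u hu => Finset.mem_range.1 hu) a))).inter
      (F.le _ _ (hA s))).inter
      (F.le n _ (measurableSet_sum_lt F hg (fun u hu => (Finset.mem_Ico.1 hu).2) a))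
  calc 3 / 16 * q * n = ∑ _s ∈ Finset.range n, 3 / 16 * q := by simp [mul_comm]
    _ ≤ ∑ s ∈ Finset.range n, μ.real (firstJumpSet g A n a s) :=
        Finset.sum_le_sum fun s hs => measureReal_firstJumpSet_ge F hg0 hg hgi hgC hA hAq hq hC
          ha hna (Finset.mem_range.1 hs) hnoJump
    _ = μ.real (⋃ s ∈ Finset.range n, firstJumpSet g A n a s) :=
        (measureReal_biUnion_finset (pairwiseDisjoint_firstJumpSet.subset (Set.subset_univ _))
          fun s _ => hm s).symm
    _ ≤ μ.real (oneJumpSet g A n (2 * a)) := measureReal_mono <| Set.iUnion₂_subset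
        fun s hs => firstJumpSet_subset_oneJumpSet (Finset.mem_range.1 hs)

theorem le_measureReal_oneJumpSet_of_jump (hg0 : ∀ u ω, 0 ≤ g u ω)
    (hgi : ∀ u, Integrable (g u) μ) (hgC : ∀ u, ∀ᵐ ω ∂μ, (μ[g u|F u]) ω ≤ C) (hC : 0 ≤ C)
    (ha : 0 < a) (hna : 4 * n * C ≤ a) (hjump : 1 / 2 ≤ μ.real (noJumpBefore A n)ᶜ) :
    3 / 8 ≤ μ.real (oneJumpSet g A n (2 * a)) := by
  have hMarkov := measureReal_inter_sum_ge_le F hg0 hgi hgC hC MeasurableSet.univ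
    (Finset.Subset.refl (Finset.range n)) (fun u _ => Nat.zero_le u) (by positivity : 0 < 2 * a)
  rw [Set.univ_inter, probReal_univ, mul_one] at hMarkov
  have hratio : n * C / (2 * a) ≤ 1 / 8 := by rw [div_le_iff₀ (by positivity)]; linarith
  linarith [measureReal_mono (μ := μ)
      (compl_noJumpBefore_subset (A := A) (n := n) (b := 2 * a) hg0),
    measureReal_union_le (μ := μ) (oneJumpSet g A n (2 * a))
      {ω | 2 * a ≤ ∑ u ∈ Finset.range n, g u ω}]

theorem min_le_measureReal_oneJumpSet (hg0 : ∀ u ω, 0 ≤ g u ω)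
    (hg : ∀ u, Measurable[F (u + 1)] (g u)) (hgi : ∀ u, Integrable (g u) μ)
    (hgC : ∀ u, ∀ᵐ ω ∂μ, (μ[g u|F u]) ω ≤ C) (hA : ∀ u, MeasurableSet[F (u + 1)] (A u))
    (hAq : ∀ u, ∀ᵐ ω ∂μ, q ≤ (μ[(A u).indicator (fun _ => (1 : ℝ))|F u]) ω)
    (hq : 0 ≤ q) (hC : 0 ≤ C) (ha : 0 < a) (hna : 4 * n * C ≤ a) :
    min (3 / 16 * q * n) (3 / 8) ≤ μ.real (oneJumpSet g A n (2 * a)) := by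
  rcases le_total (1 / 2) (μ.real (noJumpBefore A n)) with hnoJump | hnoJump
  · exact (min_le_left _ _).trans
      (mul_le_measureReal_oneJumpSet_of_noJump F hg0 hg hgi hgC hA hAq hq hC ha hna hnoJump)
  · refine (min_le_right _ _).trans (le_measureReal_oneJumpSet_of_jump F hg0 hgi hgC hC ha hna ?_)
    rw [probReal_compl_eq_one_sub (F.le n _ (measurableSet_noJumpBefore F hA n))]
    linarith

end OneBigJump

theorem oneJumpSet_increments_subset {Ω : Type*} {X : ℕ → Ω → ℝ} (hX0 : ∀ ω, X 0 ω = 0)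
    {α M b : ℝ} (hα : 0 < α) (hα1 : α ≤ 1) (hM : 0 ≤ M) (n : ℕ) :
    oneJumpSet (fun u ω => max (X (u + 1) ω - X u ω) 0 ^ α)
        (fun u => {ω | M < max (-(X (u + 1) ω - X u ω)) 0}) n b ⊆
      {ω | X n ω ≤ -M + b ^ α⁻¹} := by
  classical
  rintro ω ⟨s, hs, hjump, hsum⟩
  have hXn : X n ω = (X (s + 1) ω - X s ω) +
      ∑ u ∈ (Finset.range n).erase s, (X (u + 1) ω - X u ω) := by
    rw [Finset.add_sum_erase _ (fun u => X (u + 1) ω - X u ω) (Finset.mem_range.2 hs),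
      Finset.sum_range_sub (fun u => X u ω), hX0, sub_zero]
  have hdown : X (s + 1) ω - X s ω ≤ -M := by
    have : M < max (-(X (s + 1) ω - X s ω)) 0 := hjump
    rcases lt_max_iff.1 this with h | h <;> linarith
  have hup := ((Finset.range n).erase s).sum_le_rpow_sum_max_zero_rpow
    (fun u => X (u + 1) ω - X u ω) hα hα1
  have hroot := Real.rpow_le_rpow (Finset.sum_nonneg fun u _ => Real.rpow_nonneg
    (le_max_right (X (u + 1) ω - X u ω) 0) α) hsum (inv_nonneg.2 hα.le)
  show X n ω ≤ -M + b ^ α⁻¹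
  linarith

theorem min_le_measureReal_le_neg_add_rpow
    {Ω : Type*} {m0 : MeasurableSpace Ω} {μ : Measure Ω} [IsProbabilityMeasure μ]
    (F : Filtration ℕ m0) {X : ℕ → Ω → ℝ} (hadapted : Adapted F X) (hX0 : ∀ ω, X 0 ω = 0)
    {α β c C x₀ : ℝ} (hα : 0 < α) (hα1 : α ≤ 1) (hc : 0 ≤ c) (hC : 0 ≤ C)
    (hposint : ∀ t, Integrable (fun ω => (max (X (t + 1) ω - X t ω) 0) ^ α) μ)
    (hpos : ∀ t, ∀ᵐ ω ∂μ,
      (μ[fun ω' => (max (X (t + 1) ω' - X t ω') 0) ^ α|F t]) ω ≤ C)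
    (hneg : ∀ t, ∀ x, x₀ ≤ x → ∀ᵐ ω ∂μ,
      c * x ^ (-β) ≤ (μ[Set.indicator
        {ω' | x < max (-(X (t + 1) ω' - X t ω')) 0} (fun _ => (1:ℝ))|F t]) ω)
    {M a : ℝ} (hM : 0 ≤ M) (hMx₀ : x₀ ≤ M) (ha : 0 < a) {n : ℕ} (hna : 4 * n * C ≤ a) :
    min (3 / 16 * (c * M ^ (-β)) * n) (3 / 8) ≤ μ.real {ω | X n ω ≤ -M + (2 * a) ^ α⁻¹} := by
  have hΔ : ∀ u, Measurable[F (u + 1)] fun ω => X (u + 1) ω - X u ω := fun u =>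
    (hadapted (u + 1)).sub ((hadapted u).mono (F.mono u.le_succ) le_rfl)
  refine (min_le_measureReal_oneJumpSet F
    (g := fun u ω => max (X (u + 1) ω - X u ω) 0 ^ α)
    (A := fun u => {ω | M < max (-(X (u + 1) ω - X u ω)) 0})
    (fun u ω => Real.rpow_nonneg (le_max_right _ _) _)
    (fun u => ((hΔ u).max measurable_const).pow_const α) hposint hpos
    (fun u => measurableSet_lt measurable_const ((hΔ u).neg.max measurable_const))
    (fun u => hneg u M hMx₀) (by positivity) hC ha hna).trans ?_
  exact measureReal_mono (oneJumpSet_increments_subset hX0 hα hα1 hM n)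

theorem exists_pos_mul_rpow_le_measureReal_le
    {Ω : Type*} {m0 : MeasurableSpace Ω} {μ : Measure Ω} [IsProbabilityMeasure μ]
    (F : Filtration ℕ m0) {X : ℕ → Ω → ℝ} (hadapted : Adapted F X) (hX0 : ∀ ω, X 0 ω = 0)
    {α β c C x₀ : ℝ} (hα : 0 < α) (hα1 : α ≤ 1) (hβ : α < β) (hc : 0 < c)
    (hposint : ∀ t, Integrable (fun ω => (max (X (t + 1) ω - X t ω) 0) ^ α) μ)
    (hpos : ∀ t, ∀ᵐ ω ∂μ,
      (μ[fun ω' => (max (X (t + 1) ω' - X t ω') 0) ^ α|F t]) ω ≤ C)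
    (hneg : ∀ t, ∀ x, x₀ ≤ x → ∀ᵐ ω ∂μ,
      c * x ^ (-β) ≤ (μ[Set.indicator
        {ω' | x < max (-(X (t + 1) ω' - X t ω')) 0} (fun _ => (1:ℝ))|F t]) ω)
    (x : ℝ) :
    ∃ ε > 0, ∀ n : ℕ, 0 < n → ε * (n : ℝ) ^ (1 - β / α) ≤ μ.real {ω | X n ω ≤ x} := by
  set C' := max C 1
  set K := |x₀| + (8 * C') ^ α⁻¹ + |x| + 1
  have hK : 0 < K := by positivity
  refine ⟨min (3 / 16 * (c * K ^ (-β))) (3 / 8), by positivity, fun n hn => ?_⟩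
  set T : ℝ := (n : ℝ)
  have hT : 1 ≤ T := Nat.one_le_cast.2 hn
  have hTα : 1 ≤ T ^ α⁻¹ := Real.one_le_rpow hT (inv_nonneg.2 hα.le)
  -- the size of the single downward jump that beats the upward drift `(8 C' T) ^ (1 / α)`
  set M := K * T ^ α⁻¹
  have hMx₀ : x₀ ≤ M := by
    have hdrift : 0 ≤ (8 * C') ^ α⁻¹ := by positivity
    have : x₀ ≤ K := by linarith [le_abs_self x₀, abs_nonneg x]
    exact this.trans (le_mul_of_one_le_right hK.le hTα)
  have hMx : -M + (2 * (4 * T * C')) ^ α⁻¹ ≤ x := by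
    have hdrift : (2 * (4 * T * C')) ^ α⁻¹ = (8 * C') ^ α⁻¹ * T ^ α⁻¹ := by
      rw [show 2 * (4 * T * C') = 8 * C' * T by ring, Real.mul_rpow (by positivity) (by positivity)]
    have hsplit : M = (8 * C') ^ α⁻¹ * T ^ α⁻¹ + (|x₀| + |x| + 1) * T ^ α⁻¹ := by ring
    have hx : |x| ≤ (|x₀| + |x| + 1) * T ^ α⁻¹ :=
      (by linarith [abs_nonneg x₀] : |x| ≤ |x₀| + |x| + 1).trans
        (le_mul_of_one_le_right (by positivity) hTα)
    linarith [neg_abs_le x]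
  have hq : c * M ^ (-β) * T = c * K ^ (-β) * T ^ (1 - β / α) := by
    rw [Real.mul_rpow hK.le (by positivity), ← Real.rpow_mul (by positivity),
      show α⁻¹ * -β = -(β / α) by ring, sub_eq_neg_add, Real.rpow_add_one (by positivity)]
    ring
  have hTpow : T ^ (1 - β / α) ≤ 1 :=
    Real.rpow_le_one_of_one_le_of_nonpos hT (by rw [sub_nonpos, le_div_iff₀ hα]; linarith)
  have hTpow0 : 0 ≤ T ^ (1 - β / α) := by positivity
  calc min (3 / 16 * (c * K ^ (-β))) (3 / 8) * T ^ (1 - β / α)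
      ≤ min (3 / 16 * (c * M ^ (-β)) * T) (3 / 8) := by
        refine le_min ?_ ?_
        · rw [mul_assoc, hq]
          nlinarith [min_le_left (3 / 16 * (c * K ^ (-β))) (3 / 8)]
        · nlinarith [min_le_right (3 / 16 * (c * K ^ (-β))) (3 / 8)]
    _ ≤ μ.real {ω | X n ω ≤ -M + (2 * (4 * T * C')) ^ α⁻¹} :=
        min_le_measureReal_le_neg_add_rpow F hadapted hX0 hα hα1 hc.le (by positivity) hposint
          (fun u => (hpos u).mono fun ω h => h.trans (le_max_left _ _)) hneg (by positivity)
          hMx₀ (by positivity) le_rfl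
    _ ≤ μ.real {ω | X n ω ≤ x} := measureReal_mono fun ω hω => le_trans hω hMx

/-- Theorem 8 of the paper: non-existence of moments of order `p > β/α - 1` for
the last exit time `λ_x = max{t : X_t ≤ x}` (with `λ_x := ∞` if `{t : X_t ≤ x}`
is unbounded), under a bounded conditional `α`-moment for `Δ_t⁺` and a
conditional lower tail bound `P[Δ_t⁻ > x|F_t] ≥ c x^{-β}`. -/
theorem stmt18
    {Ω : Type*} {m0 : MeasurableSpace Ω} {μ : Measure Ω} [IsProbabilityMeasure μ]
    (F : Filtration ℕ m0) (X : ℕ → Ω → ℝ) (hadapted : Adapted F X)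
    (hX0 : ∀ ω, X 0 ω = 0)
    (α β c C x₀ : ℝ) (hα : α ∈ Set.Ioc (0:ℝ) 1) (hβ : α < β) (hc : 0 < c)
    (hposint : ∀ t, Integrable (fun ω => (max (X (t + 1) ω - X t ω) 0) ^ α) μ)
    (hpos : ∀ t, ∀ᵐ ω ∂μ,
      (μ[fun ω' => (max (X (t + 1) ω' - X t ω') 0) ^ α|F t]) ω ≤ C)
    (hneg : ∀ t, ∀ x, x₀ ≤ x → ∀ᵐ ω ∂μ,
      c * x ^ (-β) ≤ (μ[Set.indicator
        {ω' | x < max (-(X (t + 1) ω' - X t ω')) 0} (fun _ => (1:ℝ))|F t]) ω)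
    (x p : ℝ) (hp : β / α - 1 < p) :
    ∫⁻ ω, (⨆ (t : ℕ) (_ : X t ω ≤ x), (t : ℝ≥0∞)) ^ p ∂μ = ⊤ := by
  obtain ⟨hα0, hα1⟩ := hα
  have hp0 : 0 < p := by linarith [(one_lt_div hα0).2 hβ]
  obtain ⟨ε, hε, htail⟩ := exists_pos_mul_rpow_le_measureReal_le F hadapted hX0 hα0 hα1 hβ hc
    hposint hpos hneg x
  have hterm : ∀ k : ℕ, ENNReal.ofReal (min p 1 * ε * ((k : ℝ) + 1) ^ (p - β / α)) ≤
      (((k + 1 : ℕ) : ℝ≥0∞) ^ p - (k : ℝ≥0∞) ^ p) * μ {ω | X (k + 1) ω ≤ x} := by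
    intro k
    have hsplit : min p 1 * ε * ((k : ℝ) + 1) ^ (p - β / α) =
        min p 1 * ((k : ℝ) + 1) ^ (p - 1) * (ε * ((k + 1 : ℕ) : ℝ) ^ (1 - β / α)) := by
      rw [show p - β / α = (p - 1) + (1 - β / α) by ring, Real.rpow_add (by positivity)]
      push_cast; ring
    rw [hsplit, ENNReal.ofReal_mul (by positivity)]
    exact mul_le_mul' (ENNReal.ofReal_min_mul_rpow_sub_one_le k hp0)
      (ENNReal.ofReal_le_of_le_toReal (htail (k + 1) k.succ_pos))
  refine top_le_iff.1 ?_
  calc ⊤ = ∑' k : ℕ, ENNReal.ofReal (min p 1 * ε * ((k : ℝ) + 1) ^ (p - β / α)) :=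
        (ENNReal.tsum_ofReal_mul_add_one_rpow_eq_top (by positivity) (by linarith)).symm
    _ ≤ ∑' k : ℕ, (((k + 1 : ℕ) : ℝ≥0∞) ^ p - (k : ℝ≥0∞) ^ p) * μ {ω | X (k + 1) ω ≤ x} :=
        ENNReal.tsum_le_tsum hterm
    _ ≤ _ := tsum_rpow_succ_sub_mul_le_lintegral μ
        (fun t => measurableSet_le ((hadapted t).mono (F.le t) le_rfl) measurable_const) hp0.le
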